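/- Let F be a field of characteristic p. For α, γ ∈ F and β, δ ∈ F×, there is an isomorphism of F-algebras [α,β)_{p,F} ⊗ [γ,δ)_{p,F} ≅ [α+γ, β)_{p,F} ⊗ [γ, β^{-1}δ)_{p,F}. -/

import Mathlib

open scoped TensorProduct

/-- The defining relations of the symbol `p`-algebra
`[a,b)_{p,F} = F⟨x,y : x^p - x = a, y^p = b, yx - xy = y⟩`. -/
inductive SymbolRel (F : Type) [Field F] (p : ℕ) (a b : F) :
    FreeAlgebra F (Fin 2) → FreeAlgebra F (Fin 2) → Prop
  | x : SymbolRel F p a b (FreeAlgebra.ι F 0 ^ p - FreeAlgebra.ι F 0) (algebraMap F _ a)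
  | y : SymbolRel F p a b (FreeAlgebra.ι F 1 ^ p) (algebraMap F _ b)
  | comm : SymbolRel F p a b
      (FreeAlgebra.ι F 1 * FreeAlgebra.ι F 0 - FreeAlgebra.ι F 0 * FreeAlgebra.ι F 1)
      (FreeAlgebra.ι F 1)

/-- The symbol `p`-algebra `[a,b)_{p,F}`. -/
abbrev SymbolAlg (F : Type) [Field F] (p : ℕ) (a b : F) : Type :=
  RingQuot (SymbolRel F p a b)

/-! A pair `(x, y)` in an `F`-algebra satisfying the three relations (a symbol pair) is the same
thing as an algebra map out of `[a,b)`, and two symbol pairs whose entries commute crosswise give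
a map out of the tensor product. Given commuting symbol pairs `(x₁, y₁)`, `(x₂, y₂)` for `(α, β)`
and `(γ, δ)`, the pairs `(x₁ + x₂, y₁)` and `(x₂, y₁⁻¹ y₂)` are again commuting symbol pairs,
for `(α + γ, β)` and `(γ, β⁻¹ δ)`: in characteristic `p` the map `t ↦ t ^ p - t` is additive on
commuting elements, and `y₁⁻¹ x₁ y₁ = x₁ - 1` makes `y₁⁻¹ y₂` commute with `x₁ + x₂`. In the other
direction `(x₁ - x₂, y₁)` and `(x₂, y₁ y₂)` work the same way, and the two resulting maps are
inverse to each other on generators. -/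

section SymbolPair

variable {F T : Type} [Field F] [Ring T] [Algebra F T] {p : ℕ} {a b c d : F} {x y z : T}

structure IsSymbolPair (p : ℕ) (a b : F) (x y : T) : Prop where
  x_rel : x ^ p - x = algebraMap F T a
  y_rel : y ^ p = algebraMap F T b
  comm_rel : y * x - x * y = y

structure PairsCommute (x₁ y₁ x₂ y₂ : T) : Prop where
  x_x : Commute x₁ x₂
  x_y : Commute x₁ y₂
  y_x : Commute y₁ x₂
  y_y : Commute y₁ y₂

theorem IsSymbolPair.map {T' : Type} [Ring T'] [Algebra F T']
    (h : IsSymbolPair p a b x y) (f : T →ₐ[F] T') : IsSymbolPair p a b (f x) (f y) where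
  x_rel := by rw [← map_pow, ← map_sub, h.x_rel, AlgHom.commutes]
  y_rel := by rw [← map_pow, h.y_rel, AlgHom.commutes]
  comm_rel := by rw [← map_mul, ← map_mul, ← map_sub, h.comm_rel]

theorem add_pow_char_of_commute_of_algebra [CharP F p] (hp : p.Prime) {s t : T}
    (h : Commute s t) : (s + t) ^ p = s ^ p + t ^ p := by
  obtain ⟨r, hr⟩ := h.exists_add_pow_prime_eq hp
  rw [hr, ← map_natCast (algebraMap F T), CharP.cast_eq_zero, map_zero, zero_mul, zero_mul,
    zero_mul, add_zero]

theorem sub_pow_char_of_commute_of_algebra [CharP F p] (hp : p.Prime) {s t : T}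
    (h : Commute s t) : (s - t) ^ p = s ^ p - t ^ p := by
  have h' := add_pow_char_of_commute_of_algebra (F := F) hp (h.sub_left (Commute.refl t))
  rw [sub_add_cancel] at h'
  rw [eq_sub_iff_add_eq, h']

theorem IsSymbolPair.add [CharP F p] (hp : p.Prime) (h : IsSymbolPair p a b x y)
    (hz : z ^ p - z = algebraMap F T c) (hxz : Commute x z) (hyz : Commute y z) :
    IsSymbolPair p (a + c) b (x + z) y where
  x_rel := by
    rw [add_pow_char_of_commute_of_algebra (F := F) hp hxz, map_add, ← h.x_rel, ← hz]
    abel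
  y_rel := h.y_rel
  comm_rel := by rw [mul_add, add_mul, hyz.eq, add_sub_add_right_eq_sub, h.comm_rel]

theorem IsSymbolPair.sub_of_add [CharP F p] (hp : p.Prime) (h : IsSymbolPair p (a + c) b x y)
    (hz : z ^ p - z = algebraMap F T c) (hxz : Commute x z) (hyz : Commute y z) :
    IsSymbolPair p a b (x - z) y where
  x_rel := by
    rw [sub_pow_char_of_commute_of_algebra (F := F) hp hxz, ← add_sub_cancel_right a c,
      map_sub, ← h.x_rel, ← hz]
    abel
  y_rel := h.y_rel
  comm_rel := by rw [mul_sub, sub_mul, hyz.eq, sub_sub_sub_cancel_right, h.comm_rel]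

theorem IsSymbolPair.mul_left {d' e : F} {u : T} (h : IsSymbolPair p c d x y)
    (hu : u ^ p = algebraMap F T e) (hux : Commute u x) (huy : Commute u y) (hd : e * d = d') :
    IsSymbolPair p c d' x (u * y) where
  x_rel := h.x_rel
  y_rel := by rw [huy.mul_pow, hu, h.y_rel, ← map_mul, hd]
  comm_rel := by rw [mul_assoc, ← mul_assoc x, ← hux.eq, mul_assoc, ← mul_sub, h.comm_rel]

theorem IsSymbolPair.isUnit_y (hp : p ≠ 0) (hb : b ≠ 0) (h : IsSymbolPair p a b x y) :
    IsUnit y :=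
  (isUnit_pow_iff hp).mp (h.y_rel ▸ (IsUnit.mk0 b hb).map (algebraMap F T))

theorem IsSymbolPair.val_inv_pow (hb : b ≠ 0) (h : IsSymbolPair p a b x y) {v : Tˣ}
    (hv : (v : T) = y) :
    ((v⁻¹ : Tˣ) : T) ^ p = algebraMap F T b⁻¹ := by
  rw [← Units.val_pow_eq_pow_val, inv_pow]
  apply Units.inv_eq_of_mul_eq_one_right
  rw [Units.val_pow_eq_pow_val, hv, h.y_rel, ← map_mul, mul_inv_cancel₀ hb, map_one]

theorem IsSymbolPair.val_inv_comm (h : IsSymbolPair p a b x y) {v : Tˣ} (hv : (v : T) = y) :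
    ((v⁻¹ : Tˣ) : T) * x - x * ((v⁻¹ : Tˣ) : T) = -((v⁻¹ : Tˣ) : T) := by
  subst hv
  calc ((v⁻¹ : Tˣ) : T) * x - x * ((v⁻¹ : Tˣ) : T)
      = ((v⁻¹ : Tˣ) : T) * (x * v - v * x) * ((v⁻¹ : Tˣ) : T) := by
        simp only [mul_sub, sub_mul, ← mul_assoc, Units.mul_inv_cancel_right, Units.inv_mul,
          one_mul]
    _ = -((v⁻¹ : Tˣ) : T) := by
        rw [← neg_sub, h.comm_rel, mul_neg, neg_mul, Units.inv_mul, one_mul]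

theorem commute_add_mul_of_commutators {x z u w : T} (hxw : Commute x w) (huz : Commute u z)
    (hux : u * x - x * u = -u) (hwz : w * z - z * w = w) : Commute (x + z) (u * w) := by
  have hwx : u * w * x = u * x * w := by rw [mul_assoc, ← hxw.eq, ← mul_assoc]
  have hzu : z * (u * w) = u * z * w := by rw [← mul_assoc, ← huz.eq]
  have key : u * w * (x + z) - (x + z) * (u * w) = (u * x - x * u) * w + u * (w * z - z * w) := by
    rw [mul_add, add_mul, hwx, hzu]
    noncomm_ring
  rw [hux, hwz, neg_mul, neg_add_cancel, sub_eq_zero] at key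
  exact key.symm

theorem IsSymbolPair.inv_mul {x₁ y₁ x₂ y₂ : T} (h₁ : IsSymbolPair p a b x₁ y₁)
    (h₂ : IsSymbolPair p c d x₂ y₂) (hc : PairsCommute x₁ y₁ x₂ y₂) (hb : b ≠ 0) {v : Tˣ}
    (hv : (v : T) = y₁) : IsSymbolPair p c (b⁻¹ * d) x₂ (↑v⁻¹ * y₂) := by
  subst hv
  exact h₂.mul_left (h₁.val_inv_pow hb rfl) hc.y_x.units_inv_left hc.y_y.units_inv_left rfl

theorem PairsCommute.add_inv_mul {x₁ y₁ x₂ y₂ : T} (h₁ : IsSymbolPair p a b x₁ y₁)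
    (h₂ : IsSymbolPair p c d x₂ y₂) (hc : PairsCommute x₁ y₁ x₂ y₂) {v : Tˣ} (hv : (v : T) = y₁) :
    PairsCommute (x₁ + x₂) y₁ x₂ (↑v⁻¹ * y₂) where
  x_x := hc.x_x.add_left (Commute.refl x₂)
  x_y := commute_add_mul_of_commutators hc.x_y (hv ▸ hc.y_x).units_inv_left (h₁.val_inv_comm hv) h₂.comm_rel
  y_x := hc.y_x
  y_y := (hv ▸ (Commute.refl (v : T)).units_inv_right).mul_right hc.y_y

theorem PairsCommute.sub_mul {x₁ y₁ x₂ y₂ : T} (h₁ : IsSymbolPair p a b x₁ y₁)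
    (h₂ : IsSymbolPair p c d x₂ y₂) (hc : PairsCommute x₁ y₁ x₂ y₂) :
    PairsCommute (x₁ - x₂) y₁ x₂ (y₁ * y₂) where
  x_x := hc.x_x.sub_left (Commute.refl x₂)
  x_y := by
    have hneg : y₂ * -x₂ - -x₂ * y₂ = -y₂ := by
      rw [mul_neg, neg_mul, sub_neg_eq_add, neg_add_eq_sub, ← neg_sub, h₂.comm_rel]
    simpa only [neg_add_eq_sub, hc.y_y.eq] using
      commute_add_mul_of_commutators hc.y_x.symm.neg_left hc.x_y.symm hneg h₁.comm_rel
  y_x := hc.y_x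
  y_y := (Commute.refl y₁).mul_right hc.y_y

section Tensor

variable {A B : Type} [Ring A] [Algebra F A] [Ring B] [Algebra F B]

theorem IsSymbolPair.tmul_one {x y : A} (h : IsSymbolPair p a b x y) :
    IsSymbolPair p a b (x ⊗ₜ[F] (1 : B)) (y ⊗ₜ 1) :=
  h.map Algebra.TensorProduct.includeLeft

theorem IsSymbolPair.one_tmul {x y : B} (h : IsSymbolPair p a b x y) :
    IsSymbolPair p a b ((1 : A) ⊗ₜ[F] x) (1 ⊗ₜ y) :=
  h.map (Algebra.TensorProduct.includeRight : B →ₐ[F] A ⊗[F] B)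

theorem pairsCommute_tmul_one_one_tmul (x₁ y₁ : A) (x₂ y₂ : B) :
    PairsCommute (x₁ ⊗ₜ[F] (1 : B)) (y₁ ⊗ₜ 1) (1 ⊗ₜ x₂) (1 ⊗ₜ y₂) where
  x_x := (Commute.one_right x₁).tmul (Commute.one_left x₂)
  x_y := (Commute.one_right x₁).tmul (Commute.one_left y₂)
  y_x := (Commute.one_right y₁).tmul (Commute.one_left x₂)
  y_y := (Commute.one_right y₁).tmul (Commute.one_left y₂)

theorem tmul_one_mul_one_tmul (s : A) (t : B) : s ⊗ₜ[F] (1 : B) * (1 : A) ⊗ₜ t = s ⊗ₜ t := by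
  rw [Algebra.TensorProduct.tmul_mul_tmul, mul_one, one_mul]

end Tensor

end SymbolPair

namespace SymbolAlg

variable {F : Type} [Field F] {p : ℕ} {a b c d : F}

noncomputable def X : SymbolAlg F p a b :=
  RingQuot.mkAlgHom F (SymbolRel F p a b) (FreeAlgebra.ι F 0)

noncomputable def Y : SymbolAlg F p a b :=
  RingQuot.mkAlgHom F (SymbolRel F p a b) (FreeAlgebra.ι F 1)

theorem isSymbolPair : IsSymbolPair p a b (X : SymbolAlg F p a b) Y where
  x_rel := by simpa only [X, map_sub, map_pow, AlgHom.commutes] using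
    RingQuot.mkAlgHom_rel F (SymbolRel.x (F := F) (p := p) (a := a) (b := b))
  y_rel := by simpa only [Y, map_pow, AlgHom.commutes] using
    RingQuot.mkAlgHom_rel F (SymbolRel.y (F := F) (p := p) (a := a) (b := b))
  comm_rel := by simpa only [X, Y, map_sub, map_mul] using
    RingQuot.mkAlgHom_rel F (SymbolRel.comm (F := F) (p := p) (a := a) (b := b))

section Lift

variable {T : Type} [Ring T] [Algebra F T] {x y : T}

noncomputable def lift (h : IsSymbolPair p a b x y) : SymbolAlg F p a b →ₐ[F] T :=
  RingQuot.liftAlgHom F ⟨FreeAlgebra.lift F ![x, y], fun _ _ r => by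
    cases r
    · simpa using h.x_rel
    · simpa using h.y_rel
    · simpa using h.comm_rel⟩

@[simp] theorem lift_X (h : IsSymbolPair p a b x y) : lift h X = x := by
  rw [lift, X, RingQuot.liftAlgHom_mkAlgHom_apply]
  simp

@[simp] theorem lift_Y (h : IsSymbolPair p a b x y) : lift h Y = y := by
  rw [lift, Y, RingQuot.liftAlgHom_mkAlgHom_apply]
  simp

theorem algHom_ext {T : Type} [Semiring T] [Algebra F T] {f g : SymbolAlg F p a b →ₐ[F] T}
    (hX : f X = g X) (hY : f Y = g Y) : f = g := by
  apply RingQuot.ringQuot_ext'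
  apply FreeAlgebra.hom_ext
  funext i
  fin_cases i
  · exact hX
  · exact hY

theorem commute_of_commute_X_Y (f : SymbolAlg F p a b →ₐ[F] T) {t : T}
    (hX : Commute (f X) t) (hY : Commute (f Y) t) (s : SymbolAlg F p a b) : Commute (f s) t := by
  obtain ⟨s, rfl⟩ := RingQuot.mkAlgHom_surjective F _ s
  induction s using FreeAlgebra.induction with
  | grade0 r => simpa only [AlgHom.commutes] using Algebra.commute_algebraMap_left r t
  | grade1 i =>
    fin_cases i
    · exact hX
    · exact hY
  | mul s s' hs hs' => simpa only [map_mul] using hs.mul_left hs'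
  | add s s' hs hs' => simpa only [map_add] using hs.add_left hs'

noncomputable def tensorLift {x₁ y₁ x₂ y₂ : T} (h₁ : IsSymbolPair p a b x₁ y₁)
    (h₂ : IsSymbolPair p c d x₂ y₂) (hc : PairsCommute x₁ y₁ x₂ y₂) :
    SymbolAlg F p a b ⊗[F] SymbolAlg F p c d →ₐ[F] T :=
  Algebra.TensorProduct.lift (lift h₁) (lift h₂) fun s t =>
    have commute_x₂ :=
      commute_of_commute_X_Y (lift h₁) (by simpa using hc.x_x) (by simpa using hc.y_x) s
    have commute_y₂ :=
      commute_of_commute_X_Y (lift h₁) (by simpa using hc.x_y) (by simpa using hc.y_y) s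
    (commute_of_commute_X_Y (lift h₂) (by simpa using commute_x₂.symm)
      (by simpa using commute_y₂.symm) t).symm

theorem tensorLift_tmul {x₁ y₁ x₂ y₂ : T} (h₁ : IsSymbolPair p a b x₁ y₁)
    (h₂ : IsSymbolPair p c d x₂ y₂) (hc : PairsCommute x₁ y₁ x₂ y₂) (s : SymbolAlg F p a b)
    (t : SymbolAlg F p c d) : tensorLift h₁ h₂ hc (s ⊗ₜ t) = lift h₁ s * lift h₂ t :=
  Algebra.TensorProduct.lift_tmul _ _ _ s t

theorem tensor_algHom_ext {T : Type} [Semiring T] [Algebra F T]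
    {f g : SymbolAlg F p a b ⊗[F] SymbolAlg F p c d →ₐ[F] T}
    (hX₁ : f (X ⊗ₜ 1) = g (X ⊗ₜ 1)) (hY₁ : f (Y ⊗ₜ 1) = g (Y ⊗ₜ 1))
    (hX₂ : f (1 ⊗ₜ X) = g (1 ⊗ₜ X)) (hY₂ : f (1 ⊗ₜ Y) = g (1 ⊗ₜ Y)) : f = g :=
  Algebra.TensorProduct.ext (algHom_ext hX₁ hY₁) (algHom_ext hX₂ hY₂)

end Lift

noncomputable def unitY (hp : p ≠ 0) (hb : b ≠ 0) : (SymbolAlg F p a b)ˣ :=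
  (isSymbolPair.isUnit_y hp hb).unit

@[simp] theorem val_unitY (hp : p ≠ 0) (hb : b ≠ 0) :
    (unitY (a := a) hp hb : SymbolAlg F p a b) = Y :=
  IsUnit.unit_spec _

@[simp] theorem val_unitY_inv_mul_Y (hp : p ≠ 0) (hb : b ≠ 0) :
    (↑(unitY (a := a) hp hb)⁻¹ : SymbolAlg F p a b) * Y = 1 := by
  rw [← val_unitY hp hb, Units.inv_mul]

@[simp] theorem Y_mul_val_unitY_inv (hp : p ≠ 0) (hb : b ≠ 0) :
    Y * (↑(unitY (a := a) hp hb)⁻¹ : SymbolAlg F p a b) = 1 := by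
  rw [← val_unitY hp hb, Units.mul_inv]

section Slide

variable [CharP F p] (hp : p.Prime) (hb : b ≠ 0)

noncomputable def slideForward :
    SymbolAlg F p (a + c) b ⊗[F] SymbolAlg F p c (b⁻¹ * d) →ₐ[F]
      SymbolAlg F p a b ⊗[F] SymbolAlg F p c d :=
  have h₁ := (isSymbolPair (F := F) (p := p) (a := a) (b := b)).tmul_one
    (B := SymbolAlg F p c d)
  have h₂ := (isSymbolPair (F := F) (p := p) (a := c) (b := d)).one_tmul
    (A := SymbolAlg F p a b)
  have hc := pairsCommute_tmul_one_one_tmul (F := F) (X : SymbolAlg F p a b) Y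
    (X : SymbolAlg F p c d) Y
  let v := Units.map (Algebra.TensorProduct.includeLeft :
    SymbolAlg F p a b →ₐ[F] SymbolAlg F p a b ⊗[F] SymbolAlg F p c d).toMonoidHom
      (unitY hp.ne_zero hb)
  have hv : (v : SymbolAlg F p a b ⊗[F] SymbolAlg F p c d) = Y ⊗ₜ 1 := by simp [v]
  tensorLift (h₁.add hp h₂.x_rel hc.x_x hc.y_x) (h₁.inv_mul h₂ hc hb hv)
    (hc.add_inv_mul h₁ h₂ hv)

noncomputable def slideBackward :
    SymbolAlg F p a b ⊗[F] SymbolAlg F p c d →ₐ[F]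
      SymbolAlg F p (a + c) b ⊗[F] SymbolAlg F p c (b⁻¹ * d) :=
  have h₁ := (isSymbolPair (F := F) (p := p) (a := a + c) (b := b)).tmul_one
    (B := SymbolAlg F p c (b⁻¹ * d))
  have h₂ := (isSymbolPair (F := F) (p := p) (a := c) (b := b⁻¹ * d)).one_tmul
    (A := SymbolAlg F p (a + c) b)
  have hc := pairsCommute_tmul_one_one_tmul (F := F) (X : SymbolAlg F p (a + c) b) Y
    (X : SymbolAlg F p c (b⁻¹ * d)) Y
  tensorLift (h₁.sub_of_add hp h₂.x_rel hc.x_x hc.y_x)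
    (h₂.mul_left h₁.y_rel hc.y_x hc.y_y (mul_inv_cancel_left₀ hb d))
    (hc.sub_mul h₁ h₂)

@[simp] theorem slideForward_X_tmul_one :
    slideForward (a := a) (c := c) (d := d) hp hb (X ⊗ₜ 1) = X ⊗ₜ 1 + 1 ⊗ₜ X := by
  simp [slideForward, tensorLift_tmul]

@[simp] theorem slideForward_Y_tmul_one :
    slideForward (a := a) (c := c) (d := d) hp hb (Y ⊗ₜ 1) = Y ⊗ₜ 1 := by
  simp [slideForward, tensorLift_tmul]

@[simp] theorem slideForward_one_tmul_X :
    slideForward (a := a) (c := c) (d := d) hp hb (1 ⊗ₜ X) = 1 ⊗ₜ X := by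
  simp [slideForward, tensorLift_tmul]

@[simp] theorem slideForward_one_tmul_Y :
    slideForward (a := a) (c := c) (d := d) hp hb (1 ⊗ₜ Y) =
      (↑(unitY (a := a) hp.ne_zero hb)⁻¹ : SymbolAlg F p a b) ⊗ₜ Y := by
  simp [slideForward, tensorLift_tmul]

@[simp] theorem slideBackward_X_tmul_one :
    slideBackward (a := a) (c := c) (d := d) hp hb (X ⊗ₜ 1) = X ⊗ₜ 1 - 1 ⊗ₜ X := by
  simp [slideBackward, tensorLift_tmul]

@[simp] theorem slideBackward_Y_tmul_one :
    slideBackward (a := a) (c := c) (d := d) hp hb (Y ⊗ₜ 1) = Y ⊗ₜ 1 := by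
  simp [slideBackward, tensorLift_tmul]

@[simp] theorem slideBackward_one_tmul_X :
    slideBackward (a := a) (c := c) (d := d) hp hb (1 ⊗ₜ X) = 1 ⊗ₜ X := by
  simp [slideBackward, tensorLift_tmul]

@[simp] theorem slideBackward_one_tmul_Y :
    slideBackward (a := a) (c := c) (d := d) hp hb (1 ⊗ₜ Y) = Y ⊗ₜ Y := by
  simp [slideBackward, tensorLift_tmul]

theorem slideBackward_comp_slideForward :
    (slideBackward (a := a) (c := c) (d := d) hp hb).comp (slideForward hp hb) =
      AlgHom.id F _ := by
  refine tensor_algHom_ext ?_ ?_ ?_ ?_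
  · simp
  · simp
  · simp
  · rw [AlgHom.comp_apply, AlgHom.id_apply, slideForward_one_tmul_Y, ← tmul_one_mul_one_tmul,
      map_mul, slideBackward_one_tmul_Y, ← tmul_one_mul_one_tmul Y, ← mul_assoc,
      ← slideBackward_Y_tmul_one hp hb, ← map_mul, Algebra.TensorProduct.tmul_mul_tmul,
      val_unitY_inv_mul_Y, mul_one, ← Algebra.TensorProduct.one_def, map_one, one_mul]

theorem slideForward_comp_slideBackward :
    (slideForward (a := a) (c := c) (d := d) hp hb).comp (slideBackward hp hb) =
      AlgHom.id F _ := by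
  refine tensor_algHom_ext ?_ ?_ ?_ ?_
  · rw [AlgHom.comp_apply, AlgHom.id_apply, slideBackward_X_tmul_one, map_sub,
      slideForward_X_tmul_one, slideForward_one_tmul_X]
    abel
  · simp
  · simp
  · rw [AlgHom.comp_apply, AlgHom.id_apply, slideBackward_one_tmul_Y, ← tmul_one_mul_one_tmul,
      map_mul, slideForward_Y_tmul_one, slideForward_one_tmul_Y,
      Algebra.TensorProduct.tmul_mul_tmul, Y_mul_val_unitY_inv, one_mul]

end Slide

end SymbolAlg

open SymbolAlg in
theorem symbol_tensor_slide_general (p : ℕ) (hp : p.Prime) (F : Type) [Field F] [CharP F p]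
    (α γ β δ : F) (hβ : β ≠ 0) :
    Nonempty ((SymbolAlg F p α β ⊗[F] SymbolAlg F p γ δ) ≃ₐ[F]
      (SymbolAlg F p (α + γ) β ⊗[F] SymbolAlg F p γ (β⁻¹ * δ))) :=
  ⟨AlgEquiv.ofAlgHom (slideBackward hp hβ) (slideForward hp hβ)
    (slideBackward_comp_slideForward hp hβ) (slideForward_comp_slideBackward hp hβ)⟩

/-- `[α,β) ⊗ [γ,δ) ≅ [α+γ,β) ⊗ [γ,β⁻¹δ)`. -/
theorem symbol_tensor_slide (p : ℕ) (hp : p.Prime) (F : Type) [Field F] [CharP F p]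
    (α γ β δ : F) (hβ : β ≠ 0) (hδ : δ ≠ 0) :
    Nonempty ((SymbolAlg F p α β ⊗[F] SymbolAlg F p γ δ) ≃ₐ[F]
      (SymbolAlg F p (α + γ) β ⊗[F] SymbolAlg F p γ (β⁻¹ * δ))) :=
  symbol_tensor_slide_general p hp F α γ β δ hβ
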